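/- For a rooted tree T with n ≥ 2 leaves in which every internal vertex has at least 2 children, and for any r-path P, the quantity h(P) = max over components C of T∖P of (number of leaves of T in C) is well-defined (T∖P is nonempty), and if P minimizes h(P) over all r-paths then every component of T∖P has at most n/2 leaves. -/

import Mathlib

open scoped Classical

/-- A finite rooted tree given by a parent function: the root is its own parent,
and every vertex reaches the root by iterating `parent`. -/
structure ParentTree (V : Type*) where
  root : V
  parent : V → V
  parent_root : parent root = root
  reaches_root : ∀ v : V, ∃ n : ℕ, parent^[n] v = root

namespace ParentTree

variable {V : Type*} [Fintype V] [DecidableEq V]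

/-- The children of a vertex. -/
def children (T : ParentTree V) (v : V) : Finset V :=
  Finset.univ.filter fun u => u ≠ T.root ∧ T.parent u = v

/-- Leaves: vertices with no children. -/
def leaves (T : ParentTree V) : Finset V :=
  Finset.univ.filter fun v => T.children v = ∅

/-- `u` is an ancestor of `v` (possibly `u = v`). -/
def IsAncestor (T : ParentTree V) (u v : V) : Prop :=
  ∃ n : ℕ, T.parent^[n] v = u

/-- The leaves of `T` lying in the subtree rooted at `u`. -/
noncomputable def descLeaves (T : ParentTree V) (u : V) : Finset V :=
  T.leaves.filter fun v => T.IsAncestor u v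

/-- An `r`-path: a path in the tree starting at the root, i.e. a nonempty
descending list of vertices beginning with the root. -/
def IsRPath (T : ParentTree V) (P : List V) : Prop :=
  P ≠ [] ∧ P.head? = some T.root ∧ P.Chain' fun a b => b ∈ T.children a

end ParentTree

namespace ParentTree

variable {V : Type*} [Fintype V] [DecidableEq V]

/-- The roots of the components of `T ∖ P`: vertices outside `P` whose parent is in `P`. -/
noncomputable def compRoots (T : ParentTree V) (P : List V) : Finset V :=
  Finset.univ.filter fun u => u ∉ P ∧ T.parent u ∈ P

/-- `h(P)`: the maximum number of leaves of `T` in a single component of `T ∖ P`. -/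
noncomputable def hval (T : ParentTree V) (P : List V) : ℕ :=
  (T.compRoots P).sup fun u => (T.descLeaves u).card

end ParentTree

set_option linter.unusedSectionVars false

namespace ParentTree

variable {V : Type*} [Fintype V] [DecidableEq V]

variable (T : ParentTree V)

lemma mem_children {u v : V} : u ∈ T.children v ↔ u ≠ T.root ∧ T.parent u = v := by
  simp [children]

lemma mem_leaves {v : V} : v ∈ T.leaves ↔ T.children v = ∅ := by
  simp [leaves]

lemma mem_compRoots {P : List V} {u : V} :
    u ∈ T.compRoots P ↔ u ∉ P ∧ T.parent u ∈ P := by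
  simp [compRoots]

lemma mem_descLeaves {u v : V} :
    v ∈ T.descLeaves u ↔ v ∈ T.leaves ∧ T.IsAncestor u v := by
  simp [descLeaves]

lemma iterate_root (k : ℕ) : T.parent^[k] T.root = T.root := by
  induction k with
  | zero => rfl
  | succ n ih => rw [Function.iterate_succ_apply, T.parent_root, ih]

lemma isAncestor_refl (v : V) : T.IsAncestor v v := ⟨0, rfl⟩

lemma isAncestor_trans {a b c : V} (h1 : T.IsAncestor a b) (h2 : T.IsAncestor b c) :
    T.IsAncestor a c := by
  obtain ⟨m, hm⟩ := h1; obtain ⟨k, hk⟩ := h2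
  exact ⟨m + k, by rw [Function.iterate_add_apply, hk, hm]⟩

lemma isAncestor_parent {c v : V} (h : c ∈ T.children v) : T.IsAncestor v c :=
  ⟨1, (T.mem_children.1 h).2⟩

lemma root_isAncestor (v : V) : T.IsAncestor T.root v := T.reaches_root v

/-- If some positive iterate of parent fixes `v`, then `v` is the root. -/
lemma eq_root_of_iterate_fixed {v : V} {j : ℕ} (hj : j ≠ 0) (h : T.parent^[j] v = v) :
    v = T.root := by
  obtain ⟨d, hd⟩ := T.reaches_root v
  have hmul : ∀ t : ℕ, T.parent^[j * t] v = v := by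
    intro t
    induction t with
    | zero => simp
    | succ n ih => rw [Nat.mul_succ, Function.iterate_add_apply, h, ih]
  have h1 : T.parent^[j * d] v = v := hmul d
  have h2 : j * d = (j * d - d) + d := by
    have : d ≤ j * d := Nat.le_mul_of_pos_left d (Nat.pos_of_ne_zero hj)
    omega
  rw [h2, Function.iterate_add_apply, hd, T.iterate_root] at h1
  exact h1.symm

lemma isAncestor_antisymm {a b : V} (h1 : T.IsAncestor a b) (h2 : T.IsAncestor b a) :
    a = b := by
  obtain ⟨m, hm⟩ := h1; obtain ⟨k, hk⟩ := h2
  rcases Nat.eq_zero_or_pos (k + m) with h | h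
  · have hm0 : m = 0 := by omega
    rw [hm0] at hm
    exact hm.symm
  · have hfix : T.parent^[k + m] b = b := by
      rw [Function.iterate_add_apply, hm, hk]
    have hb : b = T.root := T.eq_root_of_iterate_fixed (by omega) hfix
    subst hb
    rw [T.iterate_root] at hm
    exact hm.symm

/-- If `u` is a strict ancestor of `v`, there is a child of `u` on the way. -/
lemma exists_child_of_ancestor {u v : V} (h : T.IsAncestor u v) (hne : u ≠ v) :
    ∃ c ∈ T.children u, T.IsAncestor c v := by
  classical
  have hex : ∃ n, T.parent^[n] v = u := h
  set m := Nat.find hex with hm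
  have hspec : T.parent^[m] v = u := Nat.find_spec hex
  have hm0 : m ≠ 0 := by
    intro h0
    rw [h0] at hspec
    exact hne hspec.symm
  obtain ⟨k, hk⟩ := Nat.exists_eq_succ_of_ne_zero hm0
  rw [hk, Function.iterate_succ_apply'] at hspec
  have hcu : T.parent^[k] v ≠ u := by
    intro hcu
    have hle : m ≤ k := hm ▸ Nat.find_le hcu
    omega
  have hcroot : T.parent^[k] v ≠ T.root := by
    intro hr
    rw [hr, T.parent_root] at hspec
    exact hcu (hr.trans hspec)
  exact ⟨T.parent^[k] v, T.mem_children.2 ⟨hcroot, hspec⟩, ⟨k, rfl⟩⟩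

lemma ancestor_parent_of_ne {u v : V} (h : T.IsAncestor u v) (hne : u ≠ v) :
    T.IsAncestor u (T.parent v) := by
  obtain ⟨c, hc, _⟩ := T.exists_child_of_ancestor h hne
  obtain ⟨n, hn⟩ := h
  have hn0 : n ≠ 0 := by rintro rfl; exact hne hn.symm
  obtain ⟨k, rfl⟩ := Nat.exists_eq_succ_of_ne_zero hn0
  exact ⟨k, by rw [← Function.iterate_succ_apply, hn]⟩

lemma comparable_of_common {u w v : V} (h1 : T.IsAncestor u v) (h2 : T.IsAncestor w v) :
    T.IsAncestor u w ∨ T.IsAncestor w u := by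
  obtain ⟨m, hm⟩ := h1; obtain ⟨k, hk⟩ := h2
  rcases le_total m k with h | h
  · right
    exact ⟨k - m, by rw [← hm, ← Function.iterate_add_apply, Nat.sub_add_cancel h, hk]⟩
  · left
    exact ⟨m - k, by rw [← hk, ← Function.iterate_add_apply, Nat.sub_add_cancel h, hm]⟩

lemma descLeaves_mono {u c : V} (h : T.IsAncestor u c) : T.descLeaves c ⊆ T.descLeaves u := by
  intro v hv
  rw [mem_descLeaves] at hv ⊢
  exact ⟨hv.1, T.isAncestor_trans h hv.2⟩

lemma leaf_no_strict_desc {v x : V} (hv : v ∈ T.leaves) (h : T.IsAncestor v x) : x = v := by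
  by_contra hne
  obtain ⟨c, hc, -⟩ := T.exists_child_of_ancestor h (Ne.symm hne)
  rw [mem_leaves] at hv
  rw [hv] at hc
  exact absurd hc (Finset.notMem_empty c)

noncomputable def depth (v : V) : ℕ := Nat.find (T.reaches_root v)

lemma depth_lt_of_parent {c v : V} (hroot : c ≠ T.root) (hp : T.parent c = v) :
    T.depth v < T.depth c := by
  have hspec : T.parent^[T.depth c] c = T.root := Nat.find_spec (T.reaches_root c)
  have h0 : T.depth c ≠ 0 := by
    intro h
    rw [h] at hspec
    exact hroot hspec
  obtain ⟨k, hk⟩ := Nat.exists_eq_succ_of_ne_zero h0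
  have : T.parent^[k] v = T.root := by
    rw [← hp, ← Function.iterate_succ_apply, ← hk, hspec]
  have hle : T.depth v ≤ k := Nat.find_le this
  omega

lemma descLeaves_nonempty (u : V) : (T.descLeaves u).Nonempty := by
  classical
  set S : Finset V := Finset.univ.filter (fun v => T.IsAncestor u v) with hS
  have hSne : S.Nonempty := ⟨u, by simp [hS, T.isAncestor_refl]⟩
  obtain ⟨v, hvS, hvmax⟩ := S.exists_max_image T.depth hSne
  have hanc : T.IsAncestor u v := by
    rw [hS, Finset.mem_filter] at hvS; exact hvS.2
  refine ⟨v, T.mem_descLeaves.2 ⟨?_, hanc⟩⟩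
  rw [mem_leaves]
  by_contra hch
  obtain ⟨c, hc⟩ := Finset.nonempty_iff_ne_empty.2 hch
  have hcS : c ∈ S := by
    rw [hS, Finset.mem_filter]
    exact ⟨Finset.mem_univ c, T.isAncestor_trans hanc (T.isAncestor_parent hc)⟩
  have := hvmax c hcS
  have := T.depth_lt_of_parent (T.mem_children.1 hc).1 (T.mem_children.1 hc).2
  omega

lemma descLeaves_disjoint {u w : V} (h1 : ¬ T.IsAncestor u w) (h2 : ¬ T.IsAncestor w u) :
    Disjoint (T.descLeaves u) (T.descLeaves w) := by
  rw [Finset.disjoint_left]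
  intro v hv hw
  rcases T.comparable_of_common (T.mem_descLeaves.1 hv).2 (T.mem_descLeaves.1 hw).2 with h | h
  · exact h1 h
  · exact h2 h


section Paths

lemma chain'_head_ancestor : ∀ (l : List V), l.Chain' (fun a b => b ∈ T.children a) →
    ∀ h, l.head? = some h → ∀ x ∈ l, T.IsAncestor h x := by
  intro l
  induction l with
  | nil => intro _ h hh x hx; simp at hx
  | cons a t ih =>
    intro hc h hh x hx
    have ha : a = h := by simpa using hh
    subst ha
    rcases List.mem_cons.1 hx with rfl | hxt
    · exact T.isAncestor_refl x
    · match t, hxt with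
      | b :: s, hxt =>
        have hba : b ∈ T.children a := (List.isChain_cons_cons.1 hc).1
        have := ih (List.isChain_cons_cons.1 hc).2 b rfl x hxt
        exact T.isAncestor_trans (T.isAncestor_parent hba) this

lemma chain'_comparable : ∀ (l : List V), l.Chain' (fun a b => b ∈ T.children a) →
    ∀ x ∈ l, ∀ y ∈ l, T.IsAncestor x y ∨ T.IsAncestor y x := by
  intro l
  induction l with
  | nil => intro _ x hx; simp at hx
  | cons a t ih =>
    intro hc x hx y hy
    rcases List.mem_cons.1 hx with rfl | hxt
    · exact Or.inl (T.chain'_head_ancestor (x :: t) hc x rfl y hy)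
    · rcases List.mem_cons.1 hy with rfl | hyt
      · exact Or.inr (T.chain'_head_ancestor (y :: t) hc y rfl x hx)
      · exact ih hc.tail x hxt y hyt

lemma chain'_parent_mem : ∀ (l : List V), l.Chain' (fun a b => b ∈ T.children a) →
    ∀ x ∈ l.tail, T.parent x ∈ l := by
  intro l
  induction l with
  | nil => intro _ x hx; simp at hx
  | cons a t ih =>
    intro hc x hx
    simp only [List.tail_cons] at hx
    match t, hx with
    | b :: s, hx =>
      rcases List.mem_cons.1 hx with rfl | hxs
      · have hba : x ∈ T.children a := (List.isChain_cons_cons.1 hc).1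
        rw [(T.mem_children.1 hba).2]
        exact List.mem_cons_self
      · exact List.mem_cons_of_mem a (ih (List.isChain_cons_cons.1 hc).2 x (by simpa using hxs))

lemma rpath_cons {P : List V} (hP : T.IsRPath P) : ∃ t, P = T.root :: t := by
  obtain ⟨hne, hh, -⟩ := hP
  match P, hne with
  | a :: t, _ =>
    have : a = T.root := by simpa using hh
    exact ⟨t, by rw [this]⟩

lemma rpath_root_mem {P : List V} (hP : T.IsRPath P) : T.root ∈ P := by
  obtain ⟨t, rfl⟩ := T.rpath_cons hP
  exact List.mem_cons_self

lemma rpath_parent_mem {P : List V} (hP : T.IsRPath P) {x : V} (hx : x ∈ P) :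
    T.parent x ∈ P := by
  obtain ⟨t, rfl⟩ := T.rpath_cons hP
  rcases List.mem_cons.1 hx with rfl | hxt
  · rw [T.parent_root]; exact List.mem_cons_self
  · exact T.chain'_parent_mem _ hP.2.2 x (by simpa using hxt)

lemma rpath_iterate_mem {P : List V} (hP : T.IsRPath P) {x : V} (hx : x ∈ P) (n : ℕ) :
    T.parent^[n] x ∈ P := by
  induction n with
  | zero => exact hx
  | succ k ih => rw [Function.iterate_succ_apply']; exact T.rpath_parent_mem hP ih

lemma rpath_ancestor_mem {P : List V} (hP : T.IsRPath P) {x a : V} (hx : x ∈ P)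
    (ha : T.IsAncestor a x) : a ∈ P := by
  obtain ⟨n, hn⟩ := ha
  rw [← hn]
  exact T.rpath_iterate_mem hP hx n

lemma rpath_comparable {P : List V} (hP : T.IsRPath P) {x y : V} (hx : x ∈ P) (hy : y ∈ P) :
    T.IsAncestor x y ∨ T.IsAncestor y x :=
  T.chain'_comparable P hP.2.2 x hx y hy

/-- First entry lemma: if some vertex lies outside `P`, there is a component root. -/
lemma compRoots_nonempty_of_not_mem {P : List V} (hP : T.IsRPath P) {v : V} (hv : v ∉ P) :
    (T.compRoots P).Nonempty := by
  classical
  have hex : ∃ n, T.parent^[n] v ∈ P := by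
    obtain ⟨d, hd⟩ := T.reaches_root v
    exact ⟨d, hd ▸ T.rpath_root_mem hP⟩
  set m := Nat.find hex with hm
  have hspec : T.parent^[m] v ∈ P := Nat.find_spec hex
  have hm0 : m ≠ 0 := by
    intro h0; rw [h0] at hspec; exact hv hspec
  obtain ⟨k, hk⟩ := Nat.exists_eq_succ_of_ne_zero hm0
  rw [hk, Function.iterate_succ_apply'] at hspec
  refine ⟨T.parent^[k] v, T.mem_compRoots.2 ⟨?_, hspec⟩⟩
  intro hkP
  have : m ≤ k := hm ▸ Nat.find_le hkP
  omega

end Paths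

section CutAt

variable {T}

/-- The prefix of a list up to and including the first occurrence of `x`. -/
def cutAt (x : V) : List V → List V
  | [] => []
  | a :: t => if a = x then [a] else a :: cutAt x t

lemma cutAt_subset {x y : V} : ∀ {l : List V}, y ∈ cutAt x l → y ∈ l := by
  intro l
  induction l with
  | nil => simp [cutAt]
  | cons a t ih =>
    intro hy
    by_cases h : a = x <;> simp [cutAt, h] at hy
    · simp [hy, h]
    · rcases hy with rfl | hy
      · exact List.mem_cons_self
      · exact List.mem_cons_of_mem a (ih hy)

lemma cutAt_ne_nil {x : V} {l : List V} (h : l ≠ []) : cutAt x l ≠ [] := by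
  match l, h with
  | a :: t, _ => by_cases hax : a = x <;> simp [cutAt, hax]

lemma cutAt_head? {x : V} : ∀ {l : List V}, l ≠ [] → (cutAt x l).head? = l.head? := by
  intro l h
  match l, h with
  | a :: t, _ => by_cases hax : a = x <;> simp [cutAt, hax]

lemma cutAt_self_mem {x : V} : ∀ {l : List V}, x ∈ l → x ∈ cutAt x l := by
  intro l
  induction l with
  | nil => simp
  | cons a t ih =>
    intro hx
    by_cases h : a = x
    · simp [cutAt, h]
    · rcases List.mem_cons.1 hx with rfl | hxt
      · exact absurd rfl h
      · simp only [cutAt, if_neg h]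
        exact List.mem_cons_of_mem a (ih hxt)

lemma cutAt_getLast? {x : V} : ∀ {l : List V}, x ∈ l → (cutAt x l).getLast? = some x := by
  intro l
  induction l with
  | nil => simp
  | cons a t ih =>
    intro hx
    by_cases h : a = x
    · simp [cutAt, h]
    · rcases List.mem_cons.1 hx with rfl | hxt
      · exact absurd rfl h
      · have ht : t ≠ [] := by rintro rfl; simp at hxt
        simp only [cutAt, if_neg h]
        rw [List.getLast?_cons, ← ih hxt]
        cases hcc : cutAt x t with
        | nil => exact absurd hcc (cutAt_ne_nil ht)
        | cons b s => simp [List.getLast?_cons]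

lemma cutAt_chain' {R : V → V → Prop} {x : V} :
    ∀ {l : List V}, l.Chain' R → (cutAt x l).Chain' R := by
  intro l
  induction l with
  | nil => simp [cutAt]
  | cons a t ih =>
    intro hc
    by_cases h : a = x
    · simp [cutAt, h, List.Chain', List.isChain_singleton]
    · simp only [cutAt, if_neg h]
      unfold List.Chain'
      rw [List.isChain_cons]
      refine ⟨?_, ih hc.tail⟩
      intro y hy
      cases t with
      | nil => simp [cutAt] at hy
      | cons b s =>
        have hhead : (cutAt x (b :: s)).head? = some b := cutAt_head? (by simp)
        rw [hhead] at hy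
        cases hy
        exact (List.isChain_cons_cons.1 hc).1

end CutAt

end ParentTree


open ParentTree in
/-- For a rooted tree `T` with `n ≥ 2` leaves in which every internal
vertex has at least two children, and any `r`-path `P`, the forest `T ∖ P` is
nonempty (so `h(P)` is well-defined), and if `P` minimizes `h` over all `r`-paths
then every component of `T ∖ P` has at most `n/2` leaves. -/
theorem stmt1 {V : Type*} [Fintype V] [DecidableEq V] (T : ParentTree V)
    (hbranch : ∀ v : V, T.children v ≠ ∅ → 2 ≤ (T.children v).card)
    (hn : 2 ≤ T.leaves.card)
    (P : List V) (hP : T.IsRPath P) :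
    (T.compRoots P).Nonempty ∧
      ((∀ Q : List V, T.IsRPath Q → T.hval P ≤ T.hval Q) →
        ∀ u ∈ T.compRoots P, 2 * (T.descLeaves u).card ≤ T.leaves.card) := by
  classical
  constructor
  · -- Part 1: nonemptiness
    obtain ⟨l1, hl1, l2, hl2, hne⟩ := Finset.one_lt_card.mp hn
    by_cases h1 : l1 ∈ P
    · by_cases h2 : l2 ∈ P
      · exfalso
        rcases T.rpath_comparable hP h1 h2 with h | h
        · exact hne (T.leaf_no_strict_desc hl1 h).symm
        · exact hne (T.leaf_no_strict_desc hl2 h)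
      · exact T.compRoots_nonempty_of_not_mem hP h2
    · exact T.compRoots_nonempty_of_not_mem hP h1
  · -- Part 2
    intro hmin u hu
    by_contra hbig
    push_neg at hbig
    obtain ⟨huP, hupP⟩ := T.mem_compRoots.1 hu
    have hu_root : u ≠ T.root := fun h => huP (h ▸ T.rpath_root_mem hP)
    have hcard_le : (T.descLeaves u).card ≤ T.leaves.card :=
      Finset.card_le_card (Finset.filter_subset _ _)
    -- u is not a leaf
    have hunotleaf : T.children u ≠ ∅ := by
      intro hleaf
      have hsub : T.descLeaves u ⊆ {u} := by
        intro v hv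
        rw [T.mem_descLeaves] at hv
        have := T.leaf_no_strict_desc (T.mem_leaves.2 hleaf) hv.2
        simp [this]
      have hle1 : (T.descLeaves u).card ≤ 1 := by
        simpa using Finset.card_le_card hsub
      omega
    have hch2 : 2 ≤ (T.children u).card := hbranch u hunotleaf
    -- Build the competing r-path Q
    set pre := cutAt (T.parent u) P with hpre
    have hpre_ne : pre ≠ [] := cutAt_ne_nil hP.1
    set Q := pre ++ [u] with hQ
    have hQpath : T.IsRPath Q := by
      refine ⟨by simp [hQ, hpre_ne], ?_, ?_⟩
      · have h := (cutAt_head? (x := T.parent u) hP.1).trans hP.2.1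
        rw [← hpre] at h
        obtain ⟨a, s, has⟩ := List.exists_cons_of_ne_nil hpre_ne
        rw [has] at h
        rw [hQ, has]
        simpa using h
      · rw [hQ]
        unfold List.Chain'
        rw [List.isChain_append]
        refine ⟨cutAt_chain' hP.2.2, List.isChain_singleton u, ?_⟩
        intro x hx y hy
        rw [cutAt_getLast? hupP] at hx
        simp only [List.head?_cons, Option.mem_some_iff] at hx hy
        subst hx; subst hy
        exact T.mem_children.2 ⟨hu_root, rfl⟩
    have huQ : u ∈ Q := List.mem_append.2 (Or.inr (List.mem_singleton_self u))
    -- every component of T ∖ Q is strictly smaller than descLeaves u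
    have hkey : ∀ w ∈ T.compRoots Q, (T.descLeaves w).card ≤ (T.descLeaves u).card - 1 := by
      intro w hw
      obtain ⟨hwQ, hwpQ⟩ := T.mem_compRoots.1 hw
      have hwne : w ≠ u := fun h => hwQ (h ▸ huQ)
      by_cases hpw : T.parent w = u
      · -- w is a child of u
        have hwroot : w ≠ T.root := fun h => hwQ (h ▸ T.rpath_root_mem hQpath)
        have hwch : w ∈ T.children u := T.mem_children.2 ⟨hwroot, hpw⟩
        obtain ⟨c, hc, hcw⟩ := Finset.exists_mem_ne (s := T.children u) (by omega) w
        have hsub : T.descLeaves w ⊆ T.descLeaves u :=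
          T.descLeaves_mono (T.isAncestor_parent hwch)
        obtain ⟨v, hv⟩ := T.descLeaves_nonempty c
        have hvin : v ∈ T.descLeaves u := T.descLeaves_mono (T.isAncestor_parent hc) hv
        have hvnot : v ∉ T.descLeaves w := by
          intro hvw
          rcases T.comparable_of_common (T.mem_descLeaves.1 hvw).2 (T.mem_descLeaves.1 hv).2
            with h | h
          · have hwc : w ≠ c := fun h' => hcw (h'.symm)
            have h' : T.IsAncestor w u := by
              have := T.ancestor_parent_of_ne h hwc
              rwa [(T.mem_children.1 hc).2] at this
            have : w = u := T.isAncestor_antisymm h' (T.isAncestor_parent hwch)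
            exact hwne this
          · have h' : T.IsAncestor c u := by
              have := T.ancestor_parent_of_ne h hcw
              rwa [hpw] at this
            have hcu : c = u := T.isAncestor_antisymm h' (T.isAncestor_parent hc)
            have : c ≠ T.root := (T.mem_children.1 hc).1
            apply this
            have hpcc : T.parent c = c := by rw [(T.mem_children.1 hc).2, hcu]
            exact T.eq_root_of_iterate_fixed (j := 1) one_ne_zero (by simpa using hpcc)
        have hss : T.descLeaves w ⊂ T.descLeaves u := ⟨hsub, fun h => hvnot (h hvin)⟩
        have := Finset.card_lt_card hss
        omega
      · -- parent of w lies in the old path P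
        have hwp_pre : T.parent w ∈ pre := by
          rcases List.mem_append.1 hwpQ with h | h
          · exact h
          · rw [List.mem_singleton] at h; exact absurd h hpw
        have hwpP : T.parent w ∈ P := cutAt_subset hwp_pre
        have h1 : ¬ T.IsAncestor u w := by
          intro h
          have h' := T.ancestor_parent_of_ne h (fun he => hwne he.symm)
          exact huP (T.rpath_ancestor_mem hP hwpP h')
        have h2 : ¬ T.IsAncestor w u := by
          intro h
          have h' := T.ancestor_parent_of_ne h hwne
          have hpu_Q : T.parent u ∈ Q := List.mem_append.2 (Or.inl (cutAt_self_mem hupP))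
          exact hwQ (T.rpath_ancestor_mem hQpath hpu_Q h')
        have hdisj := T.descLeaves_disjoint h1 h2
        have hsub : T.descLeaves w ⊆ T.leaves \ T.descLeaves u := by
          intro v hv
          rw [Finset.mem_sdiff]
          exact ⟨(T.mem_descLeaves.1 hv).1, Finset.disjoint_right.1 hdisj hv⟩
        have hcardw := Finset.card_le_card hsub
        have hsd : (T.leaves \ T.descLeaves u).card = T.leaves.card - (T.descLeaves u).card :=
          Finset.card_sdiff_of_subset (Finset.filter_subset _ _)
        omega
    have hQle : T.hval Q ≤ (T.descLeaves u).card - 1 := Finset.sup_le hkey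
    have hPge : (T.descLeaves u).card ≤ T.hval P :=
      Finset.le_sup (f := fun u => (T.descLeaves u).card) hu
    have hmin' := hmin Q hQpath
    have hpos := Finset.card_pos.2 (T.descLeaves_nonempty u)
    omega
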